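/- Define the binary Shannon entropy H₂(x) = −x·log₂x − (1−x)·log₂(1−x), with the convention 0·log₂0 = 0. For all p, q ∈ (0,1), setting a₁ = (1-p)(1-q)/(1-pq), a₂ = p(1-q)/(1-pq), a₃ = (1-p)q/(1-pq), one has (a₁·log₂a₁ + a₂·log₂a₂ + a₃·log₂a₃) − [((1-p)/(1-pq))·log₂((1-p)/(2(1-pq))) + (p(1-q)/(1-pq))·log₂(p(1-q)/(2(1-pq)))] = 1 − (1-p)·H₂(q)/(1−pq). -/

import Mathlib

/-- The binary Shannon entropy `H₂(x) = −x·log₂x − (1−x)·log₂(1−x)`,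
with the convention `0·log₂0 = 0` (automatic since `Real.logb 2 0 = 0`). -/
noncomputable def H2 (x : ℝ) : ℝ := -(x * Real.logb 2 x) - (1 - x) * Real.logb 2 (1 - x)

/-!
Write `D = 1 - pq` and `s = (1 - p)/D`. Then `a₁ = s(1 - q)` and `a₃ = sq`, so by the grouping
property of entropy `a₁ log₂ a₁ + a₃ log₂ a₃ = s log₂ s - s H₂(q)`. Halving an argument of
`x log₂ x` costs exactly `x`, so the left-hand side collapses to `s - s H₂(q) + a₂`, and
`s + a₂ = 1`.
-/

namespace Real

theorem mul_mul_logb_mul (b x y : ℝ) :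
    x * y * logb b (x * y) = x * y * (logb b x + logb b y) := by
  rcases eq_or_ne x 0 with rfl | hx
  · simp
  rcases eq_or_ne y 0 with rfl | hy
  · simp
  rw [logb_mul hx hy]

theorem mul_logb_sub_mul_logb_div_two (x : ℝ) : x * logb 2 x - x * logb 2 (x / 2) = x := by
  rcases eq_or_ne x 0 with rfl | hx
  · simp
  rw [logb_div hx two_ne_zero, logb_self_eq_one one_lt_two]
  ring

end Real

open Real

theorem mul_logb_mul_add_mul_logb_mul_eq_sub_mul_H2 (s t : ℝ) :
    s * (1 - t) * logb 2 (s * (1 - t)) + s * t * logb 2 (s * t) = s * logb 2 s - s * H2 t := by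
  rw [mul_mul_logb_mul, mul_mul_logb_mul, H2]
  ring

theorem relative_entropy_identity (p q : ℝ) (hp : p ∈ Set.Ioo (0:ℝ) 1)
    (hq : q ∈ Set.Ioo (0:ℝ) 1) :
    (((1 - p) * (1 - q) / (1 - p * q)) * Real.logb 2 ((1 - p) * (1 - q) / (1 - p * q)) +
        (p * (1 - q) / (1 - p * q)) * Real.logb 2 (p * (1 - q) / (1 - p * q)) +
        ((1 - p) * q / (1 - p * q)) * Real.logb 2 ((1 - p) * q / (1 - p * q))) -
      (((1 - p) / (1 - p * q)) * Real.logb 2 ((1 - p) / (2 * (1 - p * q))) +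
        (p * (1 - q) / (1 - p * q)) * Real.logb 2 (p * (1 - q) / (2 * (1 - p * q)))) =
    1 - (1 - p) * H2 q / (1 - p * q) := by
  have hD : 1 - p * q ≠ 0 := by
    nlinarith [mul_lt_mul'' hp.2 hq.2 hp.1.le hq.1.le]
  have ha₁ : (1 - p) * (1 - q) / (1 - p * q) = (1 - p) / (1 - p * q) * (1 - q) := by ring
  have ha₃ : (1 - p) * q / (1 - p * q) = (1 - p) / (1 - p * q) * q := by ring
  have hs : (1 - p) / (2 * (1 - p * q)) = (1 - p) / (1 - p * q) / 2 := by
    rw [div_div, mul_comm (1 - p * q)]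
  have ha₂ : p * (1 - q) / (2 * (1 - p * q)) = p * (1 - q) / (1 - p * q) / 2 := by
    rw [div_div, mul_comm (1 - p * q)]
  have hsum : (1 - p) / (1 - p * q) + p * (1 - q) / (1 - p * q) = 1 := by
    rw [← add_div, div_eq_one_iff_eq hD]
    ring
  set s := (1 - p) / (1 - p * q)
  set a₂ := p * (1 - q) / (1 - p * q)
  rw [ha₁, ha₃, hs, ha₂]
  linear_combination mul_logb_mul_add_mul_logb_mul_eq_sub_mul_H2 s q +
    mul_logb_sub_mul_logb_div_two s + mul_logb_sub_mul_logb_div_two a₂ + hsum
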